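/- arXiv:2311.04140 — 4 statements merged into one kernel-verified Lean document; each statement's English description precedes it below -/
import Mathlib

section
/- Let G be an undirected graph and M a matching of G with |M| ≤ μ(G) − k, where μ(G) is the maximum matching size and k ≥ 1. Then there exists an M-augmenting path in G of length less than ⌊2·μ(G)/k⌋. -/
/-! Fix a maximum matching `N` and walk from every `M`-unmatched vertex alternately along an
`N`-edge and an `M`-edge until stuck. Since both edge sets are matchings these zigzags are paths
in `M △ N`, and running one backwards from its end is again such a zigzag. A zigzag of odd length
is `M`-augmenting and ends at another `M`-unmatched vertex; one of even length ends at a vertex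
matched by `M` only, and different starts give different such ends. Counting matched vertices,
at least `2(μ - |M|) ≥ 2k` starts have odd length. Their zigzags consist of `N`-matched vertices
and any vertex lies on the zigzags of at most two starts (the two ends of one path), so summing
`length + 1` over these starts gives at most `2 · 2μ`; the shortest has length `ℓ` with
`k (ℓ + 1) ≤ 2μ`. -/

open Classical

namespace AltMatch

variable {V : Type*}

/-- `M` is a matching of `G`: a set of edges of `G` that pairwise share no vertex. -/
def IsMatching (G : SimpleGraph V) (M : Set (Sym2 V)) : Prop :=
  M ⊆ G.edgeSet ∧ ∀ e₁ ∈ M, ∀ e₂ ∈ M, e₁ ≠ e₂ → ∀ v : V, v ∈ e₁ → v ∉ e₂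

/-- `v` is unmatched by `M`. -/
def Unmatched (M : Set (Sym2 V)) (v : V) : Prop := ∀ e ∈ M, v ∉ e

/-- A walk is alternating (starting with a non-matching edge):
its `i`-th edge is in `M` iff `i` is odd. -/
def Alt {G : SimpleGraph V} {u v : V} (M : Set (Sym2 V)) (w : G.Walk u v) : Prop :=
  ∀ (i : ℕ) (h : i < w.edges.length), (w.edges.get ⟨i, h⟩ ∈ M ↔ i % 2 = 1)

/-- An alternating path (w.r.t. `M`) from `u` to `v`. -/
def IsAltPath (G : SimpleGraph V) (M : Set (Sym2 V)) {u v : V} (w : G.Walk u v) : Prop :=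
  w.IsPath ∧ Alt M w

/-- Parity of a natural number as a `Bool` (`true` = odd). -/
def parityOf (n : ℕ) : Bool := decide (n % 2 = 1)

/-- `altDist G M θ f v` : minimum length of an alternating path from `f` to `v`
of parity `θ` (`true` = odd), or `⊤` if none exists. -/
noncomputable def altDist (G : SimpleGraph V) (M : Set (Sym2 V)) (θ : Bool) (f v : V) : ℕ∞ :=
  sInf {n : ℕ∞ | ∃ w : G.Walk f v, IsAltPath G M w ∧ parityOf w.length = θ ∧ (w.length : ℕ∞) = n}

/-- `gam G M f v` : the parity of the shortest alternating path from `f` to `v`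
(`true` = odd). -/
noncomputable def gam (G : SimpleGraph V) (M : Set (Sym2 V)) (f v : V) : Bool :=
  if altDist G M true f v < altDist G M false f v then true else false

/-- `w` is a shortest `θ`-alternating path from `f` to `v`. -/
def IsShortestAlt (G : SimpleGraph V) (M : Set (Sym2 V)) (θ : Bool) (f v : V)
    (w : G.Walk f v) : Prop :=
  IsAltPath G M w ∧ parityOf w.length = θ ∧ (w.length : ℕ∞) = altDist G M θ f v

/-- An `M`-augmenting path: an alternating path of odd length between two distinct
unmatched vertices. -/
def IsAugPath (G : SimpleGraph V) (M : Set (Sym2 V)) {a b : V} (w : G.Walk a b) : Prop :=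
  a ≠ b ∧ Unmatched M a ∧ Unmatched M b ∧ IsAltPath G M w ∧ w.length % 2 = 1

/-- `μ(G)` : the maximum size of a matching of `G`. -/
noncomputable def matchingNumber (G : SimpleGraph V) : ℕ :=
  sSup {n : ℕ | ∃ M : Set (Sym2 V), IsMatching G M ∧ M.Finite ∧ M.ncard = n}

/-- An alternating base tree for `G`, `M`, `f`: a spanning tree of `G` rooted at `f`
(encoded by its parent function) such that for every `v ≠ f` with parent `u`,
`dist^{γ(v)}(v) = dist^{γ̄(v)}(u) + 1`. -/
structure AltBaseTree (G : SimpleGraph V) (M : Set (Sym2 V)) (f : V) where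
  parent : V → V
  parent_root : parent f = f
  parent_adj : ∀ v, v ≠ f → G.Adj (parent v) v
  parent_reaches : ∀ v, ∃ n : ℕ, parent^[n] v = f
  dist_eq : ∀ v, v ≠ f →
    altDist G M (gam G M f v) f v = altDist G M (!gam G M f v) f (parent v) + 1

namespace AltBaseTree

variable {G : SimpleGraph V} {M : Set (Sym2 V)} {f : V}

/-- `v` belongs to the subtree `T_t` of `T` rooted at `t` (`t` is an ancestor-or-self
of `v`). -/
def InSubtree (T : AltBaseTree G M f) (t v : V) : Prop := ∃ n : ℕ, T.parent^[n] v = t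

/-- `e` is an edge of the tree `T`. -/
def IsTreeEdge (T : AltBaseTree G M f) (e : Sym2 V) : Prop :=
  ∃ v, v ≠ f ∧ e = s(T.parent v, v)

/-- `e` is an outgoing edge of the subtree `T_t`: a non-tree edge of `G` with exactly
one endpoint inside `T_t`. -/
def IsOutgoing (T : AltBaseTree G M f) (t : V) (e : Sym2 V) : Prop :=
  e ∈ G.edgeSet ∧ ¬ T.IsTreeEdge e ∧
    ∃ x y : V, e = s(x, y) ∧ ¬ T.InSubtree t x ∧ T.InSubtree t y

end AltBaseTree

/-- Matching-parity of an edge: `true` (odd) iff `e ∈ M`. -/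
noncomputable def rho (M : Set (Sym2 V)) (e : Sym2 V) : Bool :=
  if e ∈ M then true else false

/-- Sum-level of an edge `e = {x,y}` : `dist^{ρ(e)}(x) + dist^{ρ(e)}(y)`. -/
noncomputable def levelSum (G : SimpleGraph V) (M : Set (Sym2 V)) (f : V) (e : Sym2 V) : ℕ∞ :=
  Sym2.lift ⟨fun x y => altDist G M (rho M e) f x + altDist G M (rho M e) f y,
    fun x y => add_comm _ _⟩ e

/-- Max-level of an edge `e = {x,y}` : `max (dist^{ρ(e)}(x)) (dist^{ρ(e)}(y))`. -/
noncomputable def levelMax (G : SimpleGraph V) (M : Set (Sym2 V)) (f : V) (e : Sym2 V) : ℕ∞ :=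
  Sym2.lift ⟨fun x y => max (altDist G M (rho M e) f x) (altDist G M (rho M e) f y),
    fun x y => max_comm _ _⟩ e

/-- The level of an edge: `(0,0)` for tree edges, and the lexicographic pair
`(sum-level, max-level)` otherwise. -/
noncomputable def level {G : SimpleGraph V} {M : Set (Sym2 V)} {f : V}
    (T : AltBaseTree G M f) (e : Sym2 V) : Lex (ℕ∞ × ℕ∞) :=
  if T.IsTreeEdge e then toLex ((0 : ℕ∞), (0 : ℕ∞))
  else toLex (levelSum G M f e, levelMax G M f e)

/-- The level of a walk: the maximum level of its edges. -/
noncomputable def walkLevel {G : SimpleGraph V} {M : Set (Sym2 V)} {f : V}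
    (T : AltBaseTree G M f) {a b : V} (w : G.Walk a b) : Lex (ℕ∞ × ℕ∞) :=
  (w.edges.map (level T)).foldr max (toLex ((0 : ℕ∞), (0 : ℕ∞)))

/-- `out` assigns to each vertex `v` (whose subtree has an outgoing edge) a
minimum-level outgoing edge of `T_v`. -/
def IsMOE {G : SimpleGraph V} {M : Set (Sym2 V)} {f : V}
    (T : AltBaseTree G M f) (out : V → Sym2 V) : Prop :=
  ∀ v, (∃ e, T.IsOutgoing v e) →
    T.IsOutgoing v (out v) ∧ ∀ e, T.IsOutgoing v e → level T (out v) ≤ level T e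

/-- Canonical tie-breaking rule for MOEs: if a minimum-level outgoing edge of `T_v`
incident to `v` exists, then `out v` is incident to `v`. -/
def CanonicalTie {G : SimpleGraph V} {M : Set (Sym2 V)} {f : V}
    (T : AltBaseTree G M f) (out : V → Sym2 V) : Prop :=
  ∀ v e, T.IsOutgoing v e → (∀ e', T.IsOutgoing v e' → level T e ≤ level T e') →
    v ∈ e → v ∈ out v

/-- Level of `out v`, with the virtual value `(∞,∞)` when `T_v` has no outgoing edge. -/
noncomputable def outLevel {G : SimpleGraph V} {M : Set (Sym2 V)} {f : V}
    (T : AltBaseTree G M f) (out : V → Sym2 V) (v : V) : Lex (ℕ∞ × ℕ∞) :=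
  if ∃ e, T.IsOutgoing v e then level T (out v) else toLex ((⊤ : ℕ∞), (⊤ : ℕ∞))

/-- `P` is a `θ`-extension of the pair `(s,t)`: a shortest `θ`-alternating path from
`f` to `t` passing through `s` with `level(P) < level(out(s))`. -/
def IsExtension {G : SimpleGraph V} {M : Set (Sym2 V)} {f : V}
    (T : AltBaseTree G M f) (out : V → Sym2 V) (θ : Bool) (s : V) {t : V}
    (P : G.Walk f t) : Prop :=
  IsShortestAlt G M θ f t P ∧ s ∈ P.support ∧ walkLevel T P < outLevel T out s

/-- `Q` is a `θ`-extendable path from `s` to `t`: the suffix `P[s,t]` of some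
`θ`-extension `P` of `(s,t)`. -/
def IsExtendablePath [DecidableEq V] {G : SimpleGraph V} {M : Set (Sym2 V)} {f : V}
    (T : AltBaseTree G M f) (out : V → Sym2 V) (θ : Bool) {s t : V}
    (Q : G.Walk s t) : Prop :=
  ∃ (P : G.Walk f t) (hs : s ∈ P.support), IsExtension T out θ s P ∧ P.dropUntil s hs = Q

end AltMatch

open AltMatch

namespace Function

variable {α : Type*} {f g : α → α} {a : α} {i j m n K : ℕ}

def zigzagStep (f g : α → α) (n : ℕ) : α → α := if Even n then f else g

def zigzag (f g : α → α) (a : α) : ℕ → α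
  | 0 => a
  | n + 1 => zigzagStep f g n (zigzag f g a n)

lemma zigzagStep_of_even (h : Even n) : zigzagStep f g n = f := if_pos h

lemma zigzagStep_of_odd (h : Odd n) : zigzagStep f g n = g := if_neg (Nat.not_even_iff_odd.2 h)

lemma zigzagStep_congr (h : m % 2 = n % 2) : zigzagStep f g m = zigzagStep f g n := by
  simp only [zigzagStep, Nat.even_iff, h]

lemma zigzagStep_zigzagStep :
    zigzagStep (zigzagStep f g m) (zigzagStep f g (m + 1)) n = zigzagStep f g (m + n) := by
  simp only [zigzagStep, Nat.even_add, Nat.even_add_one]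
  by_cases hm : Even m <;> by_cases hn : Even n <;> simp [hm, hn]

lemma zigzagStep_reverse :
    zigzagStep (zigzagStep f g (K + 1)) (zigzagStep f g K) n = zigzagStep f g (K + 1 + n) := by
  rw [zigzagStep_congr (m := K) (n := K + 1 + 1) (by omega), zigzagStep_zigzagStep]

lemma zigzagStep_involutive (hf : f.Involutive) (hg : g.Involutive) (n : ℕ) :
    (zigzagStep f g n).Involutive := by
  unfold zigzagStep; split <;> assumption

lemma zigzag_succ : zigzag f g a (n + 1) = zigzagStep f g n (zigzag f g a n) := rfl

lemma zigzag_add :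
    zigzag f g a (m + n) =
      zigzag (zigzagStep f g m) (zigzagStep f g (m + 1)) (zigzag f g a m) n := by
  induction n with
  | zero => rfl
  | succ n ih => rw [← add_assoc, zigzag_succ, zigzag_succ, ih, zigzagStep_zigzagStep]

-- The first index at which the zigzag stalls; junk value `0` if it never does (it does when `α`
-- is finite and `g a = a`).
noncomputable def zigzagLength (f g : α → α) (a : α) : ℕ :=
  sInf {t | zigzag f g a (t + 1) = zigzag f g a t}

noncomputable def zigzagEnd (f g : α → α) (a : α) : α := zigzag f g a (zigzagLength f g a)

lemma zigzag_succ_ne_of_lt_zigzagLength (h : n < zigzagLength f g a) :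
    zigzag f g a (n + 1) ≠ zigzag f g a n :=
  Nat.notMem_of_lt_sInf h

lemma zigzagLength_eq (halive : ∀ t < K, zigzag f g a (t + 1) ≠ zigzag f g a t)
    (hstall : zigzag f g a (K + 1) = zigzag f g a K) : zigzagLength f g a = K := by
  refine le_antisymm (Nat.sInf_le hstall) (not_lt.1 fun h => halive _ h ?_)
  exact Nat.sInf_mem (s := {t | zigzag f g a (t + 1) = zigzag f g a t}) ⟨K, hstall⟩

section Involutive

variable (hf : f.Involutive) (hg : g.Involutive)
include hf hg

lemma zigzag_pred (hn : 0 < n) :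
    zigzag f g a (n - 1) = zigzagStep f g (n - 1) (zigzag f g a n) := by
  obtain ⟨n, rfl⟩ := Nat.exists_eq_add_one_of_ne_zero hn.ne'
  rw [Nat.add_sub_cancel, zigzag_succ, zigzagStep_involutive hf hg]

lemma zigzag_reverse (ht : n ≤ K) :
    zigzag (zigzagStep f g (K + 1)) (zigzagStep f g K) (zigzag f g a K) n =
      zigzag f g a (K - n) := by
  induction n with
  | zero => rfl
  | succ n ih =>
    rw [zigzag_succ, ih (by omega), zigzagStep_reverse,
      zigzagStep_congr (n := K - n - 1) (by omega), ← zigzag_pred hf hg (by omega)]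
    rfl

lemma zigzag_injOn (ha : g a = a) (halive : ∀ t < K, zigzag f g a (t + 1) ≠ zigzag f g a t) :
    Set.InjOn (zigzag f g a) (Set.Iic K) := by
  suffices h : ∀ j, j ≤ K → ∀ i < j, zigzag f g a i ≠ zigzag f g a j by
    intro i hi j hj hij
    by_contra hne
    rcases Nat.lt_or_gt_of_ne hne with hlt | hlt
    · exact h j hj i hlt hij
    · exact h i hi j hlt hij.symm
  intro j
  induction j with
  | zero => intro _ i hi; omega
  | succ j ih =>
    intro hj i hi hij
    have hback : zigzag f g a j = zigzagStep f g j (zigzag f g a i) := by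
      rw [hij, zigzag_succ, zigzagStep_involutive hf hg]
    rcases Nat.lt_or_ge i j with hij' | hji
    · by_cases hpar : i % 2 = j % 2
      · rw [← zigzagStep_congr hpar, ← zigzag_succ] at hback
        exact ih (by omega) (i + 1) (by omega) hback.symm
      · rcases i.eq_zero_or_pos with rfl | hi0
        · rw [zigzagStep_of_odd (Nat.odd_iff.2 (by omega))] at hback
          exact ih (by omega) 0 hij' (hback.trans ha).symm
        · rw [zigzagStep_congr (n := i - 1) (by omega), ← zigzag_pred hf hg hi0] at hback
          exact ih (by omega) (i - 1) (by omega) hback.symm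
    · obtain rfl : i = j := by omega
      exact halive i (by omega) hij.symm

lemma apply_zigzag_ne_of_odd (hK : Odd (zigzagLength f g a)) (hn : n ≤ zigzagLength f g a) :
    f (zigzag f g a n) ≠ zigzag f g a n := by
  rcases Nat.even_or_odd n with heven | hodd
  · have := zigzag_succ_ne_of_lt_zigzagLength (f := f) (g := g) (a := a) (n := n) (by grind)
    rwa [zigzag_succ, zigzagStep_of_even heven] at this
  · have hpos : 0 < n := hodd.pos
    have hprev := zigzag_pred hf hg hpos (a := a)
    rw [zigzagStep_of_even (by grind)] at hprev
    have := zigzag_succ_ne_of_lt_zigzagLength (f := f) (g := g) (a := a) (n := n - 1) (by omega)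
    rwa [Nat.sub_add_cancel hpos, hprev, ne_comm] at this

section Start

variable (ha : g a = a)
include ha

lemma zigzag_injOn_zigzagLength : Set.InjOn (zigzag f g a) (Set.Iic (zigzagLength f g a)) :=
  zigzag_injOn hf hg ha fun _ => zigzag_succ_ne_of_lt_zigzagLength

lemma apply_zigzag_ne_zigzag_succ (heven : Even n) (hn : n < zigzagLength f g a) :
    g (zigzag f g a n) ≠ zigzag f g a (n + 1) := by
  rcases n.eq_zero_or_pos with rfl | hpos
  · change g a ≠ zigzag f g a 1
    rw [ha]
    exact (zigzag_succ_ne_of_lt_zigzagLength hn).symm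
  · have hprev : g (zigzag f g a n) = zigzag f g a (n - 1) := by
      rw [zigzag_pred hf hg hpos, zigzagStep_of_odd (by grind)]
    rw [hprev]
    exact fun h => absurd (zigzag_injOn_zigzagLength hf hg ha (by simp; omega) (by simp; omega) h)
      (by omega)

lemma zigzagLength_zigzagEnd :
    zigzagLength (zigzagStep f g (zigzagLength f g a + 1)) (zigzagStep f g (zigzagLength f g a))
      (zigzagEnd f g a) = zigzagLength f g a := by
  set K := zigzagLength f g a
  have hrev : ∀ t ≤ K, zigzag (zigzagStep f g (K + 1)) (zigzagStep f g K) (zigzagEnd f g a) t =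
      zigzag f g a (K - t) := fun t ht => zigzag_reverse hf hg ht
  refine zigzagLength_eq (fun t ht => ?_) ?_
  · rw [hrev _ ht, hrev _ ht.le]
    have := zigzag_succ_ne_of_lt_zigzagLength (f := f) (g := g) (a := a) (n := K - (t + 1))
      (by omega)
    rwa [show K - (t + 1) + 1 = K - t by omega, ne_comm] at this
  · rw [zigzag_succ, hrev _ le_rfl, Nat.sub_self, zigzagStep_reverse,
      zigzagStep_of_odd (by use K; ring)]
    exact ha

lemma zigzagEnd_zigzagEnd :
    zigzagEnd (zigzagStep f g (zigzagLength f g a + 1)) (zigzagStep f g (zigzagLength f g a))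
      (zigzagEnd f g a) = a := by
  rw [zigzagEnd, zigzagLength_zigzagEnd hf hg ha]
  exact (zigzag_reverse (a := a) hf hg le_rfl).trans (by rw [Nat.sub_self]; rfl)

lemma zigzagStep_succ_zigzagLength_zigzagEnd (hpos : 0 < zigzagLength f g a) :
    zigzagStep f g (zigzagLength f g a + 1) (zigzagEnd f g a) ≠ zigzagEnd f g a := by
  rw [← zigzagLength_zigzagEnd hf hg ha] at hpos
  exact zigzag_succ_ne_of_lt_zigzagLength hpos

lemma eq_of_zigzagEnd_eq {a' : α} (ha' : g a' = a')
    (hK : zigzagLength f g a % 2 = zigzagLength f g a' % 2)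
    (h : zigzagEnd f g a = zigzagEnd f g a') : a = a' := by
  rw [← zigzagEnd_zigzagEnd hf hg ha, ← zigzagEnd_zigzagEnd hf hg ha', h, zigzagStep_congr hK,
    zigzagStep_congr (m := zigzagLength f g a + 1) (n := zigzagLength f g a' + 1) (by omega)]

lemma zigzagLength_zigzagEnd_of_odd (hK : Odd (zigzagLength f g a)) :
    zigzagLength f g (zigzagEnd f g a) = zigzagLength f g a := by
  simpa only [zigzagStep_of_odd hK, zigzagStep_of_even hK.add_one] using
    zigzagLength_zigzagEnd hf hg ha

lemma zigzagEnd_zigzagEnd_of_odd (hK : Odd (zigzagLength f g a)) :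
    zigzagEnd f g (zigzagEnd f g a) = a := by
  simpa only [zigzagStep_of_odd hK, zigzagStep_of_even hK.add_one] using
    zigzagEnd_zigzagEnd hf hg ha

section Finite

variable [Finite α]

lemma zigzag_zigzagLength_succ :
    zigzag f g a (zigzagLength f g a + 1) = zigzag f g a (zigzagLength f g a) := by
  refine Nat.sInf_mem (s := {t | zigzag f g a (t + 1) = zigzag f g a t})
    (_root_.not_forall_not.1 fun hne => not_injective_infinite_finite (zigzag f g a) ?_)
  intro i j hij
  exact zigzag_injOn hf hg ha (K := max i j) (fun t _ => hne t) (by simp) (by simp) hij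

lemma zigzagLength_pos (h : f a ≠ a) : 0 < zigzagLength f g a := by
  refine Nat.pos_of_ne_zero fun h0 => h ?_
  have hstall := zigzag_zigzagLength_succ hf hg ha
  rwa [h0] at hstall

lemma zigzagStep_zigzagLength_zigzagEnd :
    zigzagStep f g (zigzagLength f g a) (zigzagEnd f g a) = zigzagEnd f g a :=
  zigzag_zigzagLength_succ hf hg ha

lemma zigzagEnd_shift (hi : i ≤ zigzagLength f g a) :
    zigzagEnd (zigzagStep f g i) (zigzagStep f g (i + 1)) (zigzag f g a i) = zigzagEnd f g a := by
  have hshift : ∀ t, zigzag (zigzagStep f g i) (zigzagStep f g (i + 1)) (zigzag f g a i) t =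
      zigzag f g a (i + t) := fun t => zigzag_add.symm
  have hstop : zigzagLength (zigzagStep f g i) (zigzagStep f g (i + 1)) (zigzag f g a i) =
      zigzagLength f g a - i := by
    refine zigzagLength_eq (fun t ht => ?_) ?_
    · rw [hshift, hshift, ← add_assoc]
      exact zigzag_succ_ne_of_lt_zigzagLength (by omega)
    · rw [hshift, hshift, ← add_assoc, Nat.add_sub_cancel' hi]
      exact zigzag_zigzagLength_succ hf hg ha
  rw [zigzagEnd, hstop, hshift, Nat.add_sub_cancel' hi, zigzagEnd]

lemma zigzagEnd_eq_of_zigzag_eq {a' : α} (ha' : g a' = a') (hi : i ≤ zigzagLength f g a)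
    (hj : j ≤ zigzagLength f g a') (hij : i % 2 = j % 2) (h : zigzag f g a i = zigzag f g a' j) :
    zigzagEnd f g a = zigzagEnd f g a' := by
  rw [← zigzagEnd_shift hf hg ha hi, ← zigzagEnd_shift hf hg ha' hj, h, zigzagStep_congr hij,
    zigzagStep_congr (m := i + 1) (n := j + 1) (by omega)]

lemma apply_zigzagEnd_of_odd (hK : Odd (zigzagLength f g a)) :
    g (zigzagEnd f g a) = zigzagEnd f g a := by
  simpa only [zigzagStep_of_odd hK] using zigzagStep_zigzagLength_zigzagEnd hf hg ha

lemma eq_or_eq_zigzagEnd_of_zigzag_eq {a' : α} (ha' : g a' = a') (hK : Odd (zigzagLength f g a))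
    (hK' : Odd (zigzagLength f g a')) (hi : i ≤ zigzagLength f g a)
    (hj : j ≤ zigzagLength f g a')
    (h : zigzag f g a i = zigzag f g a' j) : a' = a ∨ a' = zigzagEnd f g a := by
  by_cases hij : i % 2 = j % 2
  · exact Or.inl (eq_of_zigzagEnd_eq hf hg ha' ha (by grind)
      (zigzagEnd_eq_of_zigzag_eq hf hg ha ha' hi hj hij h).symm)
  · -- read the walk of `a` backwards from its end, where `i` becomes an index of the parity of `j`
    set b := zigzagEnd f g a
    have hb : g b = b := apply_zigzagEnd_of_odd hf hg ha hK
    have hKb : zigzagLength f g b = zigzagLength f g a := zigzagLength_zigzagEnd_of_odd hf hg ha hK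
    have hrev : zigzag f g b (zigzagLength f g a - i) = zigzag f g a i := by
      have := zigzag_reverse hf hg (a := a) (Nat.sub_le (zigzagLength f g a) i)
      rwa [zigzagStep_of_odd hK, zigzagStep_of_even hK.add_one, Nat.sub_sub_self hi] at this
    have hend : zigzagEnd f g b = zigzagEnd f g a' :=
      zigzagEnd_eq_of_zigzag_eq hf hg hb ha' (by omega) hj (by grind) (hrev.trans h)
    rw [zigzagEnd_zigzagEnd_of_odd hf hg ha hK] at hend
    refine Or.inr (eq_of_zigzagEnd_eq hf hg ha' hb (by grind) ?_)
    rw [← hend, zigzagEnd_zigzagEnd_of_odd hf hg ha hK]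

end Finite

end Start

end Involutive

end Function

namespace Finset

variable {ι α : Type*} [DecidableEq α] {s : Finset ι} {t : Finset α} {S : ι → Finset α}
  {n : ℕ}

lemma sum_card_le_card_mul_of_subset (hS : ∀ i ∈ s, S i ⊆ t)
    (h : ∀ a ∈ t, #{i ∈ s | a ∈ S i} ≤ n) : ∑ i ∈ s, #(S i) ≤ #t * n :=
  calc ∑ i ∈ s, #(S i) = ∑ i ∈ s, ∑ a ∈ t, if a ∈ S i then 1 else 0 := by
        refine sum_congr rfl fun i hi => ?_
        rw [sum_boole, filter_mem_eq_inter, inter_eq_right.2 (hS i hi), Nat.cast_id]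
    _ = ∑ a ∈ t, #{i ∈ s | a ∈ S i} := by
        rw [sum_comm]
        simp only [sum_boole, Nat.cast_id]
    _ ≤ #t * n := by simpa using sum_le_card_nsmul t _ n h

end Finset

namespace AltMatch

open Finset Function

variable {V : Type*} {G : SimpleGraph V} {M N : Set (Sym2 V)} {a u v : V} {n : ℕ}

noncomputable def mate (M : Set (Sym2 V)) (v : V) : V :=
  if h : ∃ u, s(v, u) ∈ M then h.choose else v

lemma mem_of_mate_ne (h : mate M v ≠ v) : s(v, mate M v) ∈ M := by
  unfold mate at h ⊢
  split_ifs at h ⊢ with hex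
  · exact hex.choose_spec
  · exact absurd rfl h

namespace IsMatching

variable (hM : IsMatching G M)
include hM

lemma mate_eq (h : s(v, u) ∈ M) : mate M v = u := by
  have hex : ∃ u, s(v, u) ∈ M := ⟨u, h⟩
  rw [mate, dif_pos hex]
  by_contra hne
  exact hM.2 _ hex.choose_spec _ h (fun he => hne (Sym2.congr_right.1 he)) v (by simp) (by simp)

lemma mate_involutive : (mate M).Involutive := fun v => by
  by_cases h : mate M v = v
  · rw [h, h]
  · exact hM.mate_eq (Sym2.eq_swap ▸ mem_of_mate_ne h)

lemma adj_mate (h : mate M v ≠ v) : G.Adj v (mate M v) :=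
  hM.1 (mem_of_mate_ne h)

lemma mate_eq_self_iff : mate M v = v ↔ Unmatched M v := by
  refine ⟨fun hv e he hve => ?_, fun hv => dif_neg fun ⟨u, hu⟩ => hv _ hu (by simp)⟩
  obtain ⟨u, rfl⟩ := Sym2.mem_iff_exists.1 hve
  exact (G.mem_edgeSet.1 (hM.1 he)).ne (hv.symm.trans (hM.mate_eq he))

lemma card_mate_ne [Fintype V] : #{v | mate M v ≠ v} = 2 * M.ncard := by
  have hfin := M.toFinite
  have hverts : ({v | mate M v ≠ v} : Finset V) = hfin.toFinset.biUnion Sym2.toFinset := by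
    ext v
    simp [hM.mate_eq_self_iff, Unmatched]
  rw [hverts, card_biUnion, sum_const_nat (m := 2), Set.ncard_eq_toFinset_card M hfin, mul_comm]
  · intro e he
    exact Sym2.card_toFinset_of_not_isDiag e
      (G.not_isDiag_of_mem_edgeSet (hM.1 ((Set.Finite.mem_toFinset hfin).1 he)))
  · intro e₁ he₁ e₂ he₂ hne
    rw [Function.onFun, Finset.disjoint_left]
    intro v h₁ h₂
    exact hM.2 e₁ (by simpa using he₁) e₂ (by simpa using he₂) hne v (by simpa using h₁)
      (by simpa using h₂)

end IsMatching

lemma exists_isMatching_ncard_eq_matchingNumber [Finite V] (G : SimpleGraph V) :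
    ∃ N, IsMatching G N ∧ N.ncard = matchingNumber G := by
  set sizes := {n | ∃ M : Set (Sym2 V), IsMatching G M ∧ M.Finite ∧ M.ncard = n}
  have hne : sizes.Nonempty :=
    ⟨0, ∅, ⟨Set.empty_subset _, by simp⟩, Set.finite_empty, by simp⟩
  have hbdd : BddAbove sizes := ⟨Nat.card (Sym2 V), by
    rintro n ⟨M, -, -, rfl⟩
    exact Set.ncard_le_card M⟩
  obtain ⟨N, hN, -, hcard⟩ := Nat.sSup_mem hne hbdd
  exact ⟨N, hN, hcard⟩

section SeqWalk

def seqWalk (G : SimpleGraph V) (x : ℕ → V) :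
    (n : ℕ) → (∀ t < n, G.Adj (x t) (x (t + 1))) → G.Walk (x 0) (x n)
  | 0, _ => .nil
  | n + 1, h => (seqWalk G x n fun t ht => h t (by omega)).concat (h n (by omega))

variable (x : ℕ → V) (h : ∀ t < n, G.Adj (x t) (x (t + 1)))

lemma length_seqWalk : (seqWalk G x n h).length = n := by
  induction n with
  | zero => rfl
  | succ n ih => simp [seqWalk, ih]

lemma support_seqWalk : (seqWalk G x n h).support = (List.range (n + 1)).map x := by
  induction n with
  | zero => rfl
  | succ n ih => simp [seqWalk, ih, List.range_succ (n := n + 1)]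

lemma edges_seqWalk : (seqWalk G x n h).edges = (List.range n).map fun t => s(x t, x (t + 1)) := by
  induction n with
  | zero => rfl
  | succ n ih => simp [seqWalk, ih, List.range_succ]

end SeqWalk

section Augmenting

variable (hM : IsMatching G M) (hN : IsMatching G N)
include hM hN

lemma adj_zigzag_mate (hn : n < zigzagLength (mate N) (mate M) a) :
    G.Adj (zigzag (mate N) (mate M) a n) (zigzag (mate N) (mate M) a (n + 1)) := by
  have hne := zigzag_succ_ne_of_lt_zigzagLength hn
  rw [zigzag_succ] at hne ⊢
  unfold zigzagStep at hne ⊢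
  split_ifs at hne ⊢
  · exact hN.adj_mate hne
  · exact hM.adj_mate hne

lemma exists_isAugPath_zigzag_mate [Finite V] (ha : mate M a = a)
    (hK : Odd (zigzagLength (mate N) (mate M) a)) :
    ∃ w : G.Walk (zigzag (mate N) (mate M) a 0)
        (zigzag (mate N) (mate M) a (zigzagLength (mate N) (mate M) a)),
      IsAugPath G M w ∧ w.length = zigzagLength (mate N) (mate M) a := by
  set K := zigzagLength (mate N) (mate M) a
  have hf := hN.mate_involutive
  have hg := hM.mate_involutive
  have hinj : Set.InjOn (zigzag (mate N) (mate M) a) (Set.Iic K) :=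
    zigzag_injOn_zigzagLength hf hg ha
  refine ⟨seqWalk G _ K fun t ht => adj_zigzag_mate hM hN ht,
    ⟨fun h => ?_, hM.mate_eq_self_iff.1 ha,
      hM.mate_eq_self_iff.1 (apply_zigzagEnd_of_odd hf hg ha hK), ⟨?_, fun i hi => ?_⟩, ?_⟩,
    length_seqWalk ..⟩
  · have : 0 = K := hinj (by simp) (by simp) h
    exact (Nat.not_even_iff_odd.2 hK) (this ▸ Nat.even_iff.2 rfl)
  · rw [SimpleGraph.Walk.isPath_def, support_seqWalk]
    exact List.Nodup.map_on (fun i hi j hj hij => hinj (by simp at hi ⊢; omega)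
      (by simp at hj ⊢; omega) hij) List.nodup_range
  · have hiK : i < K := by simpa [edges_seqWalk] using hi
    simp only [edges_seqWalk, List.get_eq_getElem, List.getElem_map, List.getElem_range]
    rcases Nat.even_or_odd i with heven | hodd
    · refine iff_of_false (fun hmem => ?_) (by grind)
      exact apply_zigzag_ne_zigzag_succ hf hg ha heven hiK (hM.mate_eq hmem)
    · refine iff_of_true ?_ (Nat.odd_iff.1 hodd)
      have hne := zigzag_succ_ne_of_lt_zigzagLength hiK
      rw [zigzag_succ, zigzagStep_of_odd hodd] at hne ⊢
      exact mem_of_mate_ne hne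
  · rw [length_seqWalk]
    exact Nat.odd_iff.1 hK

end Augmenting

section Counting

variable [Fintype V]

noncomputable def augStarts (M N : Set (Sym2 V)) : Finset V :=
  {a | mate M a = a ∧ Odd (zigzagLength (mate N) (mate M) a)}

lemma mem_augStarts {a : V} :
    a ∈ augStarts M N ↔ mate M a = a ∧ Odd (zigzagLength (mate N) (mate M) a) := by
  simp [augStarts]

variable (hM : IsMatching G M) (hN : IsMatching G N)
include hM hN

lemma card_mate_ne_le_add_card_augStarts :
    #{v | mate N v ≠ v} ≤ #{v | mate M v ≠ v} + #(augStarts M N) := by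
  have hf := hN.mate_involutive
  have hg := hM.mate_involutive
  set Vm : Finset V := {v | mate M v ≠ v}
  set Vn : Finset V := {v | mate N v ≠ v}
  set B : Finset V := {a ∈ Vn \ Vm | Even (zigzagLength (mate N) (mate M) a)}
  have hsplit : Vn \ Vm ⊆ augStarts M N ∪ B := by
    intro a ha
    rcases Nat.even_or_odd (zigzagLength (mate N) (mate M) a) with hK | hK
    · exact mem_union_right _ (mem_filter.2 ⟨ha, hK⟩)
    · exact mem_union_left _ (mem_augStarts.2 ⟨by simpa [Vm, Vn] using (mem_sdiff.1 ha).2, hK⟩)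
  -- a zigzag of even length ends at a vertex matched by `M` only
  have hB : #B ≤ #(Vm \ Vn) := by
    refine card_le_card_of_injOn (zigzagEnd (mate N) (mate M)) (fun a ha => ?_)
      (fun a ha a' ha' h => ?_)
    · simp only [B, Vm, Vn, coe_filter, mem_sdiff, mem_filter, mem_univ, true_and, not_not,
        Set.mem_ofPred_eq] at ha
      obtain ⟨⟨hfa, hga⟩, hK⟩ := ha
      have hfix := zigzagStep_zigzagLength_zigzagEnd hf hg hga
      have hmove :=
        zigzagStep_succ_zigzagLength_zigzagEnd hf hg hga (zigzagLength_pos hf hg hga hfa)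
      rw [zigzagStep_of_even hK] at hfix
      rw [zigzagStep_of_odd hK.add_one] at hmove
      simp [Vm, Vn, hfix, hmove]
    · simp only [B, Vm, Vn, coe_filter, mem_sdiff, mem_filter, mem_univ, true_and, not_not,
        Set.mem_ofPred_eq] at ha ha'
      exact eq_of_zigzagEnd_eq hf hg ha.1.2 ha'.1.2
        (by rw [Nat.even_iff.1 ha.2, Nat.even_iff.1 ha'.2]) h
  have hn := card_sdiff_add_card_inter Vn Vm
  have hm := card_sdiff_add_card_inter Vm Vn
  rw [inter_comm] at hm
  have := (card_le_card hsplit).trans (card_union_le _ _)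
  omega

lemma sum_zigzagLength_add_one_le :
    ∑ a ∈ augStarts M N, (zigzagLength (mate N) (mate M) a + 1) ≤
      #{v | mate N v ≠ v} * 2 := by
  have hf := hN.mate_involutive
  have hg := hM.mate_involutive
  let S : V → Finset V := fun a => (range (zigzagLength (mate N) (mate M) a + 1)).image
    (zigzag (mate N) (mate M) a)
  have hcard : ∀ a ∈ augStarts M N, #(S a) = zigzagLength (mate N) (mate M) a + 1 := by
    intro a ha
    rw [card_image_of_injOn, card_range]
    exact (zigzag_injOn_zigzagLength hf hg (mem_augStarts.1 ha).1).mono (by simp [Set.subset_def])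
  rw [← sum_congr rfl hcard]
  refine sum_card_le_card_mul_of_subset (fun a ha => ?_) (fun v _ => ?_)
  · obtain ⟨ha, hK⟩ := mem_augStarts.1 ha
    intro v hv
    obtain ⟨t, ht, rfl⟩ := mem_image.1 hv
    simpa using apply_zigzag_ne_of_odd hf hg hK (Nat.lt_succ_iff.1 (mem_range.1 ht))
  · rcases ({a ∈ augStarts M N | v ∈ S a}).eq_empty_or_nonempty with hempty | ⟨a, ha⟩
    · simp [hempty]
    refine (card_le_card fun a' ha' => ?_).trans
      (card_le_two (a := a) (b := zigzagEnd (mate N) (mate M) a))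
    obtain ⟨ha, hva⟩ := mem_filter.1 ha
    obtain ⟨ha', hva'⟩ := mem_filter.1 ha'
    obtain ⟨hga, hK⟩ := mem_augStarts.1 ha
    obtain ⟨hga', hK'⟩ := mem_augStarts.1 ha'
    obtain ⟨i, hi, rfl⟩ := mem_image.1 hva
    obtain ⟨j, hj, hij⟩ := mem_image.1 hva'
    simpa using eq_or_eq_zigzagEnd_of_zigzag_eq hf hg hga hga' hK hK'
      (Nat.lt_succ_iff.1 (mem_range.1 hi)) (Nat.lt_succ_iff.1 (mem_range.1 hj)) hij.symm

lemma exists_mem_augStarts_zigzagLength_le {k : ℕ} (hcard : M.ncard + k ≤ N.ncard)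
    (hk : 1 ≤ k) :
    ∃ a ∈ augStarts M N, (zigzagLength (mate N) (mate M) a + 1) * k ≤ 2 * N.ncard := by
  have hA : 2 * k ≤ #(augStarts M N) := by
    have := card_mate_ne_le_add_card_augStarts hM hN
    rw [hM.card_mate_ne, hN.card_mate_ne] at this
    omega
  obtain ⟨a, ha, hmin⟩ := (augStarts M N).exists_min_image (zigzagLength (mate N) (mate M))
    (card_pos.1 (by omega))
  have hlow := card_nsmul_le_sum _ _ _ fun b hb => Nat.add_le_add_right (hmin b hb) 1
  have hsum := sum_zigzagLength_add_one_le hM hN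
  rw [hN.card_mate_ne, smul_eq_mul] at *
  exact ⟨a, ha, by nlinarith⟩

end Counting

end AltMatch

theorem hopcroft_karp_short_augmenting_path_general
    {V : Type*} [Fintype V] (G : SimpleGraph V) (M : Set (Sym2 V))
    (hM : IsMatching G M) (k : ℕ) (hk : 1 ≤ k)
    (hcard : M.ncard + k ≤ matchingNumber G) :
    ∃ (a b : V) (w : G.Walk a b),
      IsAugPath G M w ∧ w.length < 2 * matchingNumber G / k := by
  obtain ⟨N, hN, hNcard⟩ := exists_isMatching_ncard_eq_matchingNumber G
  rw [← hNcard] at hcard ⊢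
  obtain ⟨a, ha, hshort⟩ := exists_mem_augStarts_zigzagLength_le hM hN hcard hk
  obtain ⟨w, hw, hlen⟩ := exists_isAugPath_zigzag_mate hM hN (mem_augStarts.1 ha).1
    (mem_augStarts.1 ha).2
  refine ⟨_, _, w, hw, ?_⟩
  rw [hlen, Nat.lt_iff_add_one_le, Nat.le_div_iff_mul_le (by omega)]
  exact hshort

/-- Hopcroft–Karp: if `|M| + k ≤ μ(G)` with `k ≥ 1`, then there is an `M`-augmenting
path of length less than `⌊2·μ(G)/k⌋`. -/
theorem hopcroft_karp_short_augmenting_path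
    {V : Type*} [Fintype V] [DecidableEq V] (G : SimpleGraph V) (M : Set (Sym2 V))
    (hM : IsMatching G M) (k : ℕ) (hk : 1 ≤ k)
    (hcard : M.ncard + k ≤ matchingNumber G) :
    ∃ (a b : V) (w : G.Walk a b),
      IsAugPath G M w ∧ w.length < 2 * matchingNumber G / k :=
  hopcroft_karp_short_augmenting_path_general G M hM k hk hcard
end

section
/- Berge's theorem: a matching M of a graph G is maximum if and only if there exists no M-augmenting path in G. -/
open Classical

/-!
Flipping the edges of an augmenting path enlarges a matching by one; we flip the first two edges
and recurse on the rest of the path.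

Conversely, let `|M| < |M'|`. Double counting edge–vertex incidences gives an edge `xy ∈ M'`
with `x` free in `M`. If `y` is free as well, `xy` is augmenting. Otherwise `yz ∈ M`, and
`M \ {yz}`, `M' \ {xy}` still satisfy the strict inequality, so by induction on `|M'|` there is
an `(M \ {yz})`-augmenting path `P` all of whose vertices are covered by `M \ {yz} ∪ M' \ {xy}`;
in particular `P` avoids `x` and `y`. Either `P` is already `M`-augmenting, or it has `z` as an
end, and then `x y z P` is `M`-augmenting.
-/

namespace AltMatch

open Finset SimpleGraph

variable {V : Type*} {G : SimpleGraph V} {M M' S T : Set (Sym2 V)} {e : Sym2 V}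
  {a b u v x y z : V}

lemma Unmatched.mono (h : Unmatched T v) (hST : S ⊆ T) : Unmatched S v :=
  fun e he => h e (hST he)

lemma Unmatched.union (hS : Unmatched S v) (hT : Unmatched T v) : Unmatched (S ∪ T) v :=
  fun e he => he.elim (hS e) (hT e)

lemma Unmatched.insert (h : Unmatched M v) (hv : v ∉ e) : Unmatched (insert e M) v :=
  fun e' he' => he'.elim (fun hee => hee ▸ hv) (h e')

lemma Unmatched.of_diff_singleton (h : Unmatched (M \ {e}) v) (hv : v ∉ e) : Unmatched M v :=
  fun e' he' hve' => h e' ⟨he', fun hee => hv (Set.mem_singleton_iff.mp hee ▸ hve')⟩ hve'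

lemma IsMatching.mono (hM : IsMatching G M) (h : S ⊆ M) : IsMatching G S :=
  ⟨h.trans hM.1, fun e₁ he₁ e₂ he₂ => hM.2 e₁ (h he₁) e₂ (h he₂)⟩

lemma IsMatching.eq_of_mem (hM : IsMatching G M) {e' : Sym2 V} (he : e ∈ M) (he' : e' ∈ M)
    (hv : v ∈ e) (hv' : v ∈ e') : e = e' :=
  by_contra fun hne => hM.2 e he e' he' hne v hv hv'

lemma IsMatching.unmatched_diff_singleton (hM : IsMatching G M) (he : e ∈ M) (hv : v ∈ e) :
    Unmatched (M \ {e}) v :=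
  fun _ he' hve' => he'.2 (hM.eq_of_mem he'.1 he hve' hv)

lemma IsMatching.insert_edge (hM : IsMatching G M) (h : G.Adj u v) (hu : Unmatched M u)
    (hv : Unmatched M v) : IsMatching G (insert s(u, v) M) := by
  refine ⟨Set.insert_subset h hM.1, ?_⟩
  have hfree : ∀ e ∈ M, ∀ x ∈ s(u, v), x ∉ e := by
    intro e he x hx
    rcases Sym2.mem_iff.mp hx with rfl | rfl
    exacts [hu e he, hv e he]
  rintro e₁ (rfl | he₁) e₂ (rfl | he₂) hne x hx₁ hx₂
  · exact hne rfl
  · exact hfree e₂ he₂ x hx₁ hx₂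
  · exact hfree e₁ he₁ x hx₂ hx₁
  · exact hM.2 e₁ he₁ e₂ he₂ hne x hx₁ hx₂

lemma IsMatching.exchange (hM : IsMatching G M) (h : G.Adj a u) (ha : Unmatched M a)
    (huv : s(u, v) ∈ M) : IsMatching G (insert s(a, u) (M \ {s(u, v)})) :=
  (hM.mono Set.sdiff_subset).insert_edge h (ha.mono Set.sdiff_subset)
    (hM.unmatched_diff_singleton huv (Sym2.mem_mk_left u v))

lemma sum_card_incident_eq_two_mul_card [Fintype V] (S : Finset (Sym2 V))
    (hS : ∀ e ∈ S, ¬ e.IsDiag) : ∑ v, #{e ∈ S | v ∈ e} = 2 * #S := by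
  have := sum_card_bipartiteAbove_eq_sum_card_bipartiteBelow (s := univ) (t := S)
    (r := fun v e => v ∈ e)
  simp only [bipartiteAbove, bipartiteBelow] at this
  rw [this, card_eq_sum_ones, mul_sum, mul_one]
  refine sum_congr rfl fun e he => ?_
  rw [← Sym2.card_toFinset_of_not_isDiag e (hS e he)]
  congr 1
  ext
  simp

lemma IsMatching.card_incident_le_one [Fintype V] (hM : IsMatching G M) (v : V) :
    #{e ∈ M.toFinset | v ∈ e} ≤ 1 :=
  card_le_one.mpr fun e he e' he' => by
    simp only [mem_filter, Set.mem_toFinset] at he he'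
    exact hM.eq_of_mem he.1 he'.1 he.2 he'.2

lemma card_incident_pos_iff [Fintype V] :
    0 < #{e ∈ S.toFinset | v ∈ e} ↔ ¬ Unmatched S v := by
  simp [card_pos, filter_nonempty_iff, Unmatched]

lemma IsMatching.ncard_le_of_forall_unmatched [Fintype V] (hM : IsMatching G M)
    (hM' : IsMatching G M') (h : ∀ v, Unmatched M v → Unmatched M' v) :
    M'.ncard ≤ M.ncard := by
  have hloopless {S : Set (Sym2 V)} (hS : IsMatching G S) : ∀ e ∈ S.toFinset, ¬ e.IsDiag :=
    fun e he => G.not_isDiag_of_mem_edgeSet (hS.1 (Set.mem_toFinset.mp he))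
  have hle (v : V) : #{e ∈ M'.toFinset | v ∈ e} ≤ #{e ∈ M.toFinset | v ∈ e} := by
    rcases Nat.eq_zero_or_pos #{e ∈ M'.toFinset | v ∈ e} with h0 | hpos
    · omega
    · have := card_incident_pos_iff.mpr (mt (h v) (card_incident_pos_iff.mp hpos))
      have := hM'.card_incident_le_one v
      omega
  have := sum_le_sum fun v (_ : v ∈ univ) => hle v
  rw [sum_card_incident_eq_two_mul_card _ (hloopless hM'),
    sum_card_incident_eq_two_mul_card _ (hloopless hM)] at this
  rw [Set.ncard_eq_toFinset_card', Set.ncard_eq_toFinset_card']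
  omega

lemma exists_mem_unmatched_of_ncard_lt [Fintype V] (hM : IsMatching G M)
    (hM' : IsMatching G M') (h : M.ncard < M'.ncard) :
    ∃ x y, s(x, y) ∈ M' ∧ Unmatched M x := by
  by_contra! hcon
  refine h.not_ge (hM.ncard_le_of_forall_unmatched hM' fun v hv e he hve => ?_)
  obtain ⟨y, rfl⟩ := Sym2.mem_iff_exists.mp hve
  exact hcon v y he hv

lemma alt_cons_nil_iff (h : G.Adj u v) : Alt M (.cons h .nil : G.Walk u v) ↔ s(u, v) ∉ M := by
  simp [Alt]

lemma alt_cons_cons_iff (h : G.Adj u v) (h' : G.Adj v x) (q : G.Walk x y) :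
    Alt M (.cons h (.cons h' q)) ↔ s(u, v) ∉ M ∧ s(v, x) ∈ M ∧ Alt M q := by
  simp only [Alt, Walk.edges_cons, List.length_cons]
  constructor
  · intro halt
    refine ⟨by simpa using halt 0 (by omega), by simpa using halt 1 (by omega), fun i hi => ?_⟩
    simpa [Nat.add_mod] using halt (i + 2) (by omega)
  · rintro ⟨h₀, h₁, hq⟩ (_ | _ | i) hi
    · simpa using h₀
    · simpa using h₁
    · have := hq i (by omega)
      simp only [List.get_eq_getElem, List.getElem_cons_succ] at this ⊢
      rw [this]
      omega

lemma Alt.congr {w : G.Walk u v} (hw : Alt M w) (h : ∀ e ∈ w.edges, e ∈ M ↔ e ∈ M') :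
    Alt M' w :=
  fun i hi => (h _ (List.get_mem _ _)).symm.trans (hw i hi)

lemma Alt.of_diff_singleton {w : G.Walk a b} (hw : Alt (M \ {s(y, z)}) w)
    (hy : y ∉ w.support) : Alt M w :=
  hw.congr fun _ he => ⟨fun h => h.1, fun h => ⟨h, by
    rintro rfl
    exact hy (w.fst_mem_support_of_mem_edges he)⟩⟩

lemma Alt.reverse {w : G.Walk u v} (hw : Alt M w) (hodd : w.length % 2 = 1) :
    Alt M w.reverse := by
  intro i hi
  simp only [Walk.edges_reverse, List.length_reverse, List.get_eq_getElem,
    List.getElem_reverse] at hi ⊢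
  have := hw (w.edges.length - 1 - i) (by omega)
  simp only [List.get_eq_getElem, Walk.length_edges] at this hi ⊢
  rw [this]
  omega

lemma IsAugPath.reverse {w : G.Walk a b} (hw : IsAugPath G M w) : IsAugPath G M w.reverse := by
  obtain ⟨hab, ha, hb, ⟨hpath, halt⟩, hodd⟩ := hw
  exact ⟨hab.symm, hb, ha, ⟨hpath.reverse, halt.reverse hodd⟩, by simpa using hodd⟩

lemma isAugPath_cons_nil (h : G.Adj a b) (ha : Unmatched M a) (hb : Unmatched M b) :
    IsAugPath G M (.cons h .nil) :=
  ⟨h.ne, ha, hb,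
    ⟨by simp [h.ne], (alt_cons_nil_iff h).mpr fun hab => ha _ hab (Sym2.mem_mk_left a b)⟩,
    rfl⟩

lemma IsAugPath.of_cons_cons (hM : IsMatching G M) {h : G.Adj a u} {h' : G.Adj u v}
    {q : G.Walk v b} (hw : IsAugPath G M (.cons h (.cons h' q))) :
    IsAugPath G (insert s(a, u) (M \ {s(u, v)})) q := by
  obtain ⟨hab, -, hb, ⟨hpath, halt⟩, hodd⟩ := hw
  obtain ⟨-, huv, haltq⟩ := (alt_cons_cons_iff h h' q).mp halt
  simp only [Walk.cons_isPath_iff, Walk.support_cons, List.mem_cons, not_or] at hpath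
  obtain ⟨⟨hq, huq⟩, -, haq⟩ := hpath
  have hfree : ∀ x ∈ q.support, x ∉ s(a, u) := fun x hx hxe => by
    rcases Sym2.mem_iff.mp hxe with rfl | rfl
    exacts [haq hx, huq hx]
  have hedges : ∀ e ∈ q.edges, e ∈ M ↔ e ∈ insert s(a, u) (M \ {s(u, v)}) := by
    intro e he
    have hea : e ≠ s(a, u) := by rintro rfl; exact haq (q.fst_mem_support_of_mem_edges he)
    have heu : e ≠ s(u, v) := by rintro rfl; exact huq (q.fst_mem_support_of_mem_edges he)
    simp [hea, heu]
  have hqodd : q.length % 2 = 1 := by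
    simp only [Walk.length_cons] at hodd
    omega
  refine ⟨?_, ?_, (hb.mono Set.sdiff_subset).insert (hfree b q.end_mem_support),
    ⟨hq, haltq.congr hedges⟩, hqodd⟩
  · rintro rfl
    simp [Walk.length_eq_zero_iff.mpr (Walk.isPath_iff_nil.mp hq)] at hqodd
  · exact (hM.unmatched_diff_singleton huv (Sym2.mem_mk_right u v)).insert
      (hfree v q.start_mem_support)

theorem IsAugPath.exists_isMatching_ncard_eq_add_one [Finite V] :
    ∀ {M : Set (Sym2 V)} {a b : V} {w : G.Walk a b}, IsMatching G M → IsAugPath G M w →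
      ∃ M', IsMatching G M' ∧ M'.ncard = M.ncard + 1
  | _, _, _, .nil, _, hw => absurd hw.2.2.2.2 (by simp)
  | _, a, b, .cons h .nil, hM, ⟨_, ha, hb, _⟩ =>
    ⟨_, hM.insert_edge h ha hb,
      Set.ncard_insert_of_notMem fun hab => ha _ hab (Sym2.mem_mk_left a b)⟩
  | _, _, _, .cons h (.cons h' q), hM, hw => by
    obtain ⟨hau, huv, -⟩ := (alt_cons_cons_iff h h' q).mp hw.2.2.2.1.2
    obtain ⟨M₂, hM₂, hcard⟩ :=
      exists_isMatching_ncard_eq_add_one (hM.exchange h hw.2.1 huv) (hw.of_cons_cons hM)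
    exact ⟨M₂, hM₂, by rw [hcard, Set.ncard_exchange hau huv]⟩

lemma IsAugPath.cons_cons (hM : IsMatching G M) (hyz : s(y, z) ∈ M) (hxy : G.Adj x y)
    (hx : Unmatched M x) {P : G.Walk z b} (hP : IsAugPath G (M \ {s(y, z)}) P)
    (hxP : x ∉ P.support) (hyP : y ∉ P.support) :
    IsAugPath G M (.cons hxy (.cons (G.mem_edgeSet.mp (hM.1 hyz)) P)) := by
  obtain ⟨hzb, -, hb, ⟨hpath, halt⟩, hodd⟩ := hP
  refine ⟨fun hxb => hxP (hxb ▸ P.end_mem_support), hx, hb.of_diff_singleton ?_,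
    ⟨?_, ?_⟩, ?_⟩
  · intro hbyz
    rcases Sym2.mem_iff.mp hbyz with rfl | rfl
    exacts [hyP P.end_mem_support, hzb rfl]
  · simp [hpath, hyP, hxy.ne, hxP]
  · exact (alt_cons_cons_iff _ _ _).mpr
      ⟨fun h => hx _ h (Sym2.mem_mk_left x y), hyz, halt.of_diff_singleton hyP⟩
  · simp only [Walk.length_cons]
    omega

lemma IsAugPath.exists_of_diff_singleton (hM : IsMatching G M) (hyz : s(y, z) ∈ M)
    (hxy : G.Adj x y) (hx : Unmatched M x) {P : G.Walk a b}
    (hP : IsAugPath G (M \ {s(y, z)}) P) (hxP : x ∉ P.support) (hyP : y ∉ P.support) :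
    ∃ (c d : V) (w : G.Walk c d), IsAugPath G M w ∧
      ∀ v ∈ w.support, v = x ∨ v = y ∨ v ∈ P.support := by
  by_cases hza : z = a
  · subst hza
    exact ⟨x, b, _, hP.cons_cons hM hyz hxy hx hxP hyP, by simp⟩
  by_cases hzb : z = b
  · subst hzb
    exact ⟨x, a, _, hP.reverse.cons_cons hM hyz hxy hx (by simpa using hxP) (by simpa using hyP),
      by simp⟩
  obtain ⟨hab, ha, hb, ⟨hpath, halt⟩, hodd⟩ := hP
  have hfree : ∀ v ∈ P.support, v ≠ z → v ∉ s(y, z) := fun v hv hvz hvyz => by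
    rcases Sym2.mem_iff.mp hvyz with rfl | rfl
    exacts [hyP hv, hvz rfl]
  exact ⟨a, b, P, ⟨hab, ha.of_diff_singleton (hfree a P.start_mem_support (Ne.symm hza)),
    hb.of_diff_singleton (hfree b P.end_mem_support (Ne.symm hzb)),
    ⟨hpath, halt.of_diff_singleton hyP⟩, hodd⟩, fun v hv => .inr (.inr hv)⟩

theorem exists_isAugPath_of_ncard_lt [Fintype V] (hM : IsMatching G M)
    (hM' : IsMatching G M') (hlt : M.ncard < M'.ncard) :
    ∃ (a b : V) (w : G.Walk a b), IsAugPath G M w ∧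
      ∀ v ∈ w.support, ¬ Unmatched (M ∪ M') v := by
  obtain ⟨n, hn⟩ : ∃ n, M'.ncard = n := ⟨_, rfl⟩
  induction n generalizing M M' with
  | zero => omega
  | succ n ih =>
  obtain ⟨x, y, hxy, hx⟩ := exists_mem_unmatched_of_ncard_lt hM hM' hlt
  have hadj : G.Adj x y := hM'.1 hxy
  have hxy_covered : ∀ v ∈ s(x, y), ¬ Unmatched (M ∪ M') v := fun v hv h => h _ (.inr hxy) hv
  by_cases hy : Unmatched M y
  · refine ⟨x, y, _, isAugPath_cons_nil hadj hx hy, ?_⟩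
    simpa using ⟨hxy_covered x (Sym2.mem_mk_left x y), hxy_covered y (Sym2.mem_mk_right x y)⟩
  obtain ⟨z, hyz⟩ : ∃ z, s(y, z) ∈ M := by
    simp only [Unmatched, not_forall, not_not] at hy
    obtain ⟨e, he, hye⟩ := hy
    obtain ⟨z, rfl⟩ := Sym2.mem_iff_exists.mp hye
    exact ⟨z, he⟩
  have hx₀ : Unmatched (M \ {s(y, z)} ∪ M' \ {s(x, y)}) x :=
    (hx.mono Set.sdiff_subset).union (hM'.unmatched_diff_singleton hxy (Sym2.mem_mk_left x y))
  have hy₀ : Unmatched (M \ {s(y, z)} ∪ M' \ {s(x, y)}) y :=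
    (hM.unmatched_diff_singleton hyz (Sym2.mem_mk_left y z)).union
      (hM'.unmatched_diff_singleton hxy (Sym2.mem_mk_right x y))
  have hMpos : 0 < M.ncard := (Set.ncard_pos).mpr ⟨_, hyz⟩
  obtain ⟨a, b, P, hP, hPcov⟩ := ih (M := M \ {s(y, z)}) (M' := M' \ {s(x, y)})
    (hM.mono Set.sdiff_subset) (hM'.mono Set.sdiff_subset)
    (by simp only [Set.ncard_sdiff_singleton_of_mem hyz, Set.ncard_sdiff_singleton_of_mem hxy]
        omega)
    (by simp only [Set.ncard_sdiff_singleton_of_mem hxy]; omega)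
  obtain ⟨c, d, w, hw, hsupp⟩ := hP.exists_of_diff_singleton hM hyz hadj hx
    (fun h => hPcov x h hx₀) (fun h => hPcov y h hy₀)
  refine ⟨c, d, w, hw, fun v hv => ?_⟩
  rcases hsupp v hv with rfl | rfl | hvP
  · exact hxy_covered v (Sym2.mem_mk_left v y)
  · exact hxy_covered v (Sym2.mem_mk_right x v)
  · exact fun h => hPcov v hvP (h.mono (Set.union_subset_union Set.sdiff_subset Set.sdiff_subset))

end AltMatch

open AltMatch

theorem berge_maximum_iff_no_augmenting_path_general
    {V : Type*} [Fintype V] (G : SimpleGraph V) (M : Set (Sym2 V))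
    (hM : IsMatching G M) :
    (∀ M' : Set (Sym2 V), IsMatching G M' → M'.ncard ≤ M.ncard) ↔
      ¬ ∃ (a b : V) (w : G.Walk a b), IsAugPath G M w := by
  constructor
  · rintro hmax ⟨a, b, w, hw⟩
    obtain ⟨M', hM', hcard⟩ := hw.exists_isMatching_ncard_eq_add_one hM
    have := hmax M' hM'
    omega
  · intro hno M' hM'
    by_contra! hlt
    obtain ⟨a, b, w, hw, -⟩ := exists_isAugPath_of_ncard_lt hM hM' hlt
    exact hno ⟨a, b, w, hw⟩

/-- Berge's theorem: `M` is a maximum matching iff there is no `M`-augmenting path. -/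
theorem berge_maximum_iff_no_augmenting_path
    {V : Type*} [Fintype V] [DecidableEq V] (G : SimpleGraph V) (M : Set (Sym2 V))
    (hM : IsMatching G M) :
    (∀ M' : Set (Sym2 V), IsMatching G M' → M'.ncard ≤ M.ncard) ↔
      ¬ ∃ (a b : V) (w : G.Walk a b), IsAugPath G M w :=
  berge_maximum_iff_no_augmenting_path_general G M hM
end

section
/- Existence of alternating base trees: given a graph G, matching M, and unmatched vertex f such that every vertex of G is reachable from f by an alternating path, there exists a spanning tree T of G rooted at f such that for every vertex v ≠ f with parent u in T, dist^{γ(v)}(v) = dist^{γ̄(v)}(u) + 1, where γ̄(v) denotes the parity opposite to γ(v). -/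
/-! Every `v ≠ f` takes as parent the penultimate vertex `u` of a shortest alternating path `P`
of parity `γ(v)`. The prefix of `P` ending at `u` is a shortest alternating path of the opposite
parity: a shorter one would either pass through `v` or extend by the edge `uv`, and in both cases
undercut `dist^{γ(v)}(v)`. Hence `dist^{γ(u)}(u) < dist^{γ(v)}(v)`, so iterating the parent map
reaches `f`. -/

open Classical

open AltMatch

theorem Function.exists_iterate_eq_of_lt {α β : Type*} [Preorder β] [WellFoundedLT β]
    (g : α → α) (φ : α → β) (a : α) (hg : ∀ x, x ≠ a → φ (g x) < φ x) (x : α) :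
    ∃ n, g^[n] x = a := by
  induction x using (InvImage.wf φ wellFounded_lt).induction with
  | _ x ih =>
    by_cases hx : x = a
    · exact ⟨0, hx⟩
    · obtain ⟨n, hn⟩ := ih (g x) (hg x hx)
      exact ⟨n + 1, hn⟩

namespace AltMatch

open SimpleGraph

variable {V : Type*} {G : SimpleGraph V} {M : Set (Sym2 V)}

lemma parityOf_succ (n : ℕ) : parityOf (n + 1) = !parityOf n := by
  simp only [parityOf]
  rcases Nat.mod_two_eq_zero_or_one n with h | h <;> simp [Nat.add_mod, h]

lemma mod_two_eq_of_parityOf_eq {a b : ℕ} (h : parityOf a = parityOf b) : a % 2 = b % 2 := by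
  simp only [parityOf, decide_eq_decide] at h
  omega

lemma Alt.of_append_left {u v w : V} {p : G.Walk u v} {q : G.Walk v w}
    (h : Alt M (p.append q)) : Alt M p := by
  intro i hi
  have hi' : i < (p.append q).edges.length := by
    rw [Walk.edges_append, List.length_append]; omega
  simpa [Walk.edges_append, List.getElem_append_left hi] using h i hi'

lemma alt_concat_iff {u v w : V} {p : G.Walk u v} (h : G.Adj v w) :
    Alt M (p.concat h) ↔ Alt M p ∧ (s(v, w) ∈ M ↔ p.length % 2 = 1) := by
  simp only [Alt, List.get_eq_getElem, Walk.edges_concat, List.concat_eq_append,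
    List.length_append, List.length_singleton]
  constructor
  · intro halt
    refine ⟨fun i hi => ?_, ?_⟩
    · simpa [List.getElem_append_left hi] using halt i (by omega)
    · simpa using halt p.edges.length (by omega)
  · rintro ⟨halt, hlast⟩ i hi
    rcases Nat.lt_or_ge i p.edges.length with hlt | hge
    · simpa [List.getElem_append_left hlt] using halt i hlt
    · obtain rfl : i = p.edges.length := by omega
      simpa using hlast

lemma altDist_le_length {θ : Bool} {f v : V} (w : G.Walk f v) (hw : IsAltPath G M w)
    (hθ : parityOf w.length = θ) : altDist G M θ f v ≤ w.length :=
  sInf_le ⟨w, hw, hθ, rfl⟩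

lemma exists_isShortestAlt {θ : Bool} {f v : V} (h : altDist G M θ f v ≠ ⊤) :
    ∃ w : G.Walk f v, IsShortestAlt G M θ f v w := by
  have hne : {n : ℕ∞ | ∃ w : G.Walk f v, IsAltPath G M w ∧ parityOf w.length = θ ∧
      (w.length : ℕ∞) = n}.Nonempty := by
    by_contra hempty
    rw [Set.not_nonempty_iff_eq_empty] at hempty
    exact h (by rw [altDist, hempty, sInf_empty])
  obtain ⟨w, hw, hθ, hlen⟩ := csInf_mem hne
  exact ⟨w, hw, hθ, hlen⟩

lemma altDist_gam_le (θ : Bool) (f v : V) :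
    altDist G M (gam G M f v) f v ≤ altDist G M θ f v := by
  unfold gam
  split_ifs with h
  · cases θ
    exacts [h.le, le_rfl]
  · cases θ
    exacts [le_rfl, not_lt.mp h]

lemma altDist_gam_ne_top {f v : V}
    (h : altDist G M true f v ≠ ⊤ ∨ altDist G M false f v ≠ ⊤) :
    altDist G M (gam G M f v) f v ≠ ⊤ := by
  rcases h with h | h <;> exact ne_top_of_le_ne_top h (altDist_gam_le _ f v)

lemma IsShortestAlt.of_concat {f u v : V} {q : G.Walk f u} {h : G.Adj u v}
    (hw : IsShortestAlt G M (gam G M f v) f v (q.concat h)) :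
    IsShortestAlt G M (!gam G M f v) f u q := by
  obtain ⟨⟨hpath, halt⟩, hθ, hlen⟩ := hw
  rw [Walk.concat_isPath_iff] at hpath
  rw [alt_concat_iff] at halt
  rw [Walk.length_concat] at hθ hlen
  have hqθ : parityOf q.length = !gam G M f v := by rw [← hθ, parityOf_succ, Bool.not_not]
  have hq : altDist G M (!gam G M f v) f u ≤ q.length :=
    altDist_le_length q ⟨hpath.1, halt.1⟩ hqθ
  refine ⟨⟨hpath.1, halt.1⟩, hqθ, le_antisymm ?_ hq⟩
  by_contra! hshorter
  obtain ⟨Q, ⟨hQpath, hQalt⟩, hQθ, hQlen⟩ :=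
    exists_isShortestAlt (ne_top_of_lt hshorter)
  have hQq : Q.length < q.length := by rw [← hQlen] at hshorter; exact_mod_cast hshorter
  by_cases hvQ : v ∈ Q.support
  · have hpre : IsAltPath G M (Q.takeUntil v hvQ) := by
      refine ⟨hQpath.takeUntil hvQ, Alt.of_append_left (q := Q.dropUntil v hvQ) ?_⟩
      rwa [Walk.take_spec]
    have hle := (altDist_gam_le _ f v).trans (altDist_le_length _ hpre rfl)
    rw [← hlen, Nat.cast_le] at hle
    have := Q.length_takeUntil_le_length hvQ
    omega
  · have hext : IsAltPath G M (Q.concat h) := by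
      refine ⟨hQpath.concat hvQ h, (alt_concat_iff h).mpr ⟨hQalt, ?_⟩⟩
      rw [mod_two_eq_of_parityOf_eq (hQθ.trans hqθ.symm)]
      exact halt.2
    have hle := altDist_le_length _ hext
      (by rw [Walk.length_concat, parityOf_succ, hQθ, Bool.not_not])
    rw [← hlen, Walk.length_concat, Nat.cast_le] at hle
    omega

theorem exists_adj_altDist_eq_add_one {f v : V}
    (hreach : altDist G M true f v ≠ ⊤ ∨ altDist G M false f v ≠ ⊤) (hv : v ≠ f) :
    ∃ u, G.Adj u v ∧
      altDist G M (gam G M f v) f v = altDist G M (!gam G M f v) f u + 1 ∧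
      altDist G M (gam G M f u) f u < altDist G M (gam G M f v) f v := by
  obtain ⟨w, hw⟩ := exists_isShortestAlt (altDist_gam_ne_top hreach)
  have hnil : ¬ w.Nil := Walk.not_nil_of_ne hv.symm
  set h := w.adj_penultimate hnil
  rw [← Walk.concat_dropLast h] at hw
  have hq := hw.of_concat
  refine ⟨w.penultimate, h, ?_, ?_⟩
  · rw [← hw.2.2, ← hq.2.2, Walk.length_concat]
    push_cast
    rfl
  · calc altDist G M (gam G M f _) f _ ≤ altDist G M (!gam G M f v) f _ := altDist_gam_le _ _ _
      _ = w.dropLast.length := hq.2.2.symm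
      _ < (w.dropLast.concat h).length := by rw [Walk.length_concat]; exact_mod_cast lt_add_one _
      _ = _ := hw.2.2

end AltMatch

theorem altBaseTree_exists_general
    {V : Type*} (G : SimpleGraph V) (M : Set (Sym2 V))
    (f : V)
    (hreach : ∀ v : V, altDist G M true f v ≠ ⊤ ∨ altDist G M false f v ≠ ⊤) :
    Nonempty (AltBaseTree G M f) := by
  choose u hadj hdist hlt using fun v (hv : v ≠ f) => exists_adj_altDist_eq_add_one (hreach v) hv
  let parent v := if hv : v = f then f else u v hv
  have parent_of_ne {v} (hv : v ≠ f) : parent v = u v hv := dif_neg hv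
  refine ⟨⟨parent, dif_pos rfl, fun v hv => ?_, Function.exists_iterate_eq_of_lt parent
    (fun v => altDist G M (gam G M f v) f v) f fun v hv => ?_, fun v hv => ?_⟩⟩ <;>
    rw [parent_of_ne hv]
  exacts [hadj v hv, hlt v hv, hdist v hv]

/-- Existence of alternating base trees: if every vertex is reachable from the
unmatched vertex `f` by an alternating path, then an alternating base tree exists. -/
theorem altBaseTree_exists
    {V : Type*} [Fintype V] [DecidableEq V] (G : SimpleGraph V) (M : Set (Sym2 V))
    (f : V) (hM : IsMatching G M) (hf : Unmatched M f)
    (hreach : ∀ v : V, altDist G M true f v ≠ ⊤ ∨ altDist G M false f v ≠ ⊤) :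
    Nonempty (AltBaseTree G M f) :=
  altBaseTree_exists_general G M f hreach
end

section
/- In an alternating base tree T, let t be a vertex and let P be an alternating path from f to an ancestor-or-self s of t such that level(P) < level(out(s)). Then P contains the tree edge {p(s), s}. In particular, any alternating path from f to t not containing {p(t), t} has level at least level(out(t)). -/
open Classical

open AltMatch

/-!
`P` starts at `f ∉ T_s` and ends at `t ∈ T_s`, so some edge of `P` enters `T_s`. If that edge
is not a tree edge it is outgoing for `T_s`, so its level is at least `level(out(s))`, which
exceeds `level(P)`. A tree edge entering `T_s` must join `s` to its parent, because a subtree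
contains the children of each of its vertices.
-/

namespace AltMatch

variable {V : Type*} {G : SimpleGraph V} {M : Set (Sym2 V)} {f : V}

lemma level_le_walkLevel (T : AltBaseTree G M f) {a b : V} {w : G.Walk a b} {e : Sym2 V}
    (h : e ∈ w.edges) : level T e ≤ walkLevel T w :=
  List.le_max_of_le' _ (List.mem_map_of_mem h) le_rfl

lemma outLevel_le_level_of_isOutgoing {T : AltBaseTree G M f} {out : V → Sym2 V}
    (hmoe : IsMOE T out) {s : V} {e : Sym2 V} (he : T.IsOutgoing s e) :
    outLevel T out s ≤ level T e := by
  have hex : ∃ e, T.IsOutgoing s e := ⟨e, he⟩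
  rw [outLevel, if_pos hex]
  exact (hmoe s hex).2 e he

namespace AltBaseTree

variable {T : AltBaseTree G M f} {s : V}

lemma not_inSubtree_root (hs : s ≠ f) : ¬ T.InSubtree s f := by
  rintro ⟨n, hn⟩
  rw [Function.iterate_fixed T.parent_root n] at hn
  exact hs hn.symm

lemma InSubtree.of_parent {v : V} (h : T.InSubtree s (T.parent v)) : T.InSubtree s v := by
  obtain ⟨n, hn⟩ := h
  exact ⟨n + 1, by rwa [Function.iterate_succ_apply]⟩

lemma InSubtree.eq_or_parent {v : V} (h : T.InSubtree s v) :
    v = s ∨ T.InSubtree s (T.parent v) := by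
  obtain ⟨_ | n, hn⟩ := h
  · exact Or.inl hn
  · exact Or.inr ⟨n, by rwa [← Function.iterate_succ_apply]⟩

lemma IsTreeEdge.eq_parent_edge_of_enters_subtree {x y : V} (hxy : T.IsTreeEdge s(x, y))
    (hx : ¬ T.InSubtree s x) (hy : T.InSubtree s y) : s(x, y) = s(T.parent s, s) := by
  obtain ⟨v, -, hv⟩ := hxy
  rcases Sym2.eq_iff.mp hv with ⟨rfl, rfl⟩ | ⟨rfl, rfl⟩
  · rcases hy.eq_or_parent with rfl | hp
    · rfl
    · exact absurd hp hx
  · exact absurd hy.of_parent hx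

end AltBaseTree

end AltMatch

theorem low_level_path_contains_parent_edge_general
    {V : Type*} (G : SimpleGraph V) (M : Set (Sym2 V))
    (f : V)
    (T : AltBaseTree G M f) (out : V → Sym2 V) (hmoe : IsMOE T out)
    (s t : V) (hs : s ≠ f) (hanc : T.InSubtree s t)
    (P : G.Walk f t)
    (hlev : walkLevel T P < outLevel T out s) :
    s(T.parent s, s) ∈ P.edges := by
  obtain ⟨d, hd, hx, hy⟩ := P.exists_boundary_dart {v | ¬ T.InSubtree s v}
    (AltBaseTree.not_inSubtree_root hs) (not_not.mpr hanc)
  have hy : T.InSubtree s d.snd := not_not.mp hy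
  have hmem : d.edge ∈ P.edges := List.mem_map_of_mem hd
  by_cases htree : T.IsTreeEdge d.edge
  · rwa [← htree.eq_parent_edge_of_enters_subtree hx hy]
  · have hout : T.IsOutgoing s d.edge :=
      ⟨P.edges_subset_edgeSet hmem, htree, d.fst, d.snd, rfl, hx, hy⟩
    exact absurd (outLevel_le_level_of_isOutgoing hmoe hout |>.trans
      (level_le_walkLevel T hmem)) hlev.not_ge

/-- If `s ≠ f` is an ancestor-or-self of `t` and `P` is an alternating path from `f`
to `t` with `level(P) < level(out(s))`, then `P` contains the tree edge `{p(s), s}`. -/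
theorem low_level_path_contains_parent_edge
    {V : Type*} [Fintype V] [DecidableEq V] (G : SimpleGraph V) (M : Set (Sym2 V))
    (f : V) (hM : IsMatching G M) (hf : Unmatched M f)
    (hreach : ∀ v : V, altDist G M true f v ≠ ⊤ ∨ altDist G M false f v ≠ ⊤)
    (T : AltBaseTree G M f) (out : V → Sym2 V) (hmoe : IsMOE T out)
    (s t : V) (hs : s ≠ f) (hanc : T.InSubtree s t)
    (P : G.Walk f t) (hP : IsAltPath G M P)
    (hlev : walkLevel T P < outLevel T out s) :
    s(T.parent s, s) ∈ P.edges :=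
  low_level_path_contains_parent_edge_general G M f T out hmoe s t hs hanc P hlev
end
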